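/- arXiv:2508.21705 — 5 statements merged into one kernel-verified Lean document; each statement's English description precedes it below -/
import Mathlib

section
/- Let (A, m, k) be a finite local Gorenstein k-algebra with a symmetric nondegenerate A-linear pairing Φ : A × A → k (i.e., Φ(ab,c) = Φ(b,ac)). Then for every i ≥ 0, Φ induces a nondegenerate pairing between m^i/m^{i+1} and (0 : m^{i+1})/(0 : m^i). -/
/-!
Invariance `Φ (a * b) c = Φ b (a * c)` together with nondegeneracy identifies the
`Φ`-orthogonal of an ideal `I` with its annihilator `(0 : I)`; as `A` is finite dimensional,
taking orthogonals twice is the identity, so the orthogonal of `(0 : I)` is `I` itself.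
Applied to `I = m^(i+1)` and `I = m^i` this gives the two halves of the statement.
-/

namespace LinearMap.BilinForm

variable {k A : Type*} [Field k] [CommRing A] [Algebra k A] {Φ : LinearMap.BilinForm k A}

theorem orthogonal_ideal_eq_annihilator (hΦ : Φ.IsSymm) (hsep : Φ.SeparatingLeft)
    (hinv : ∀ a b c : A, Φ (a * b) c = Φ b (a * c)) (I : Ideal A) :
    Φ.orthogonal (I.restrictScalars k) = I.annihilator.restrictScalars k := by
  ext b
  simp only [Submodule.restrictScalars_mem, Submodule.mem_annihilator, smul_eq_mul,
    mem_orthogonal_iff]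
  constructor
  · intro hb c hc
    refine hsep _ fun d => ?_
    calc Φ (b * c) d = Φ b (c * d) := by rw [mul_comm, hinv]
      _ = Φ (c * d) b := hΦ.eq _ _
      _ = 0 := hb _ (I.mul_mem_right d hc)
  · intro hb c hc
    calc Φ c b = Φ 1 (c * b) := by rw [← hinv, mul_one]
      _ = 0 := by rw [mul_comm, hb c hc, map_zero]

theorem orthogonal_annihilator_eq_ideal [FiniteDimensional k A] (hΦ : Φ.IsSymm)
    (hnd : Φ.Nondegenerate) (hinv : ∀ a b c : A, Φ (a * b) c = Φ b (a * c)) (I : Ideal A) :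
    Φ.orthogonal (I.annihilator.restrictScalars k) = I.restrictScalars k := by
  rw [← orthogonal_ideal_eq_annihilator hΦ hnd.1 hinv, orthogonal_orthogonal hnd hΦ.isRefl]

end LinearMap.BilinForm

/-- Let `(A, m, k)` be a finite local (Gorenstein) `k`-algebra with a
symmetric nondegenerate `A`-linear pairing `Φ : A × A → k` (i.e. `Φ(ab,c) = Φ(b,ac)`).
Then for every `i ≥ 0`, `Φ` induces a nondegenerate pairing between `m^i/m^{i+1}` and
`(0 : m^{i+1})/(0 : m^i)`. Nondegeneracy of the induced pairing is expressed elementwise: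
an element of `m^i` pairing to zero with all of `(0 : m^{i+1})` lies in `m^{i+1}`, and an
element of `(0 : m^{i+1})` pairing to zero with all of `m^i` lies in `(0 : m^i)`. -/
theorem induced_pairing_nondegenerate {k A : Type*} [Field k] [CommRing A] [Algebra k A]
    [FiniteDimensional k A] [IsLocalRing A]
    (Φ : A →ₗ[k] A →ₗ[k] k)
    (hsymm : ∀ a b : A, Φ a b = Φ b a)
    (hnondeg : ∀ a : A, (∀ b : A, Φ a b = 0) → a = 0)
    (hAlin : ∀ a b c : A, Φ (a * b) c = Φ b (a * c))
    (i : ℕ) :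
    (∀ a ∈ (IsLocalRing.maximalIdeal A) ^ i,
      (∀ b : A, (∀ c ∈ (IsLocalRing.maximalIdeal A) ^ (i + 1), b * c = 0) → Φ a b = 0) →
      a ∈ (IsLocalRing.maximalIdeal A) ^ (i + 1)) ∧
    (∀ b : A, (∀ c ∈ (IsLocalRing.maximalIdeal A) ^ (i + 1), b * c = 0) →
      (∀ a ∈ (IsLocalRing.maximalIdeal A) ^ i, Φ a b = 0) →
      (∀ c ∈ (IsLocalRing.maximalIdeal A) ^ i, b * c = 0)) := by
  have hΦ : LinearMap.BilinForm.IsSymm Φ := ⟨hsymm⟩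
  have hnd : Φ.Nondegenerate := hΦ.isRefl.nondegenerate_iff_separatingLeft.mpr hnondeg
  set m := IsLocalRing.maximalIdeal A
  constructor
  · intro a _ ha
    have ha_orth :
        a ∈ LinearMap.BilinForm.orthogonal Φ ((m ^ (i + 1)).annihilator.restrictScalars k) :=
      fun b hb => (hsymm b a).trans <| ha b fun c hc => by
        simpa using Submodule.mem_annihilator.mp hb c hc
    rwa [LinearMap.BilinForm.orthogonal_annihilator_eq_ideal hΦ hnd hAlin] at ha_orth
  · intro b _ hb
    have hb_orth : b ∈ LinearMap.BilinForm.orthogonal Φ ((m ^ i).restrictScalars k) := hb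
    rw [LinearMap.BilinForm.orthogonal_ideal_eq_annihilator hΦ hnondeg hAlin] at hb_orth
    simpa using Submodule.mem_annihilator.mp hb_orth
end

section
/- With the notation of Iarrobino's symmetric decomposition for a finite local Gorenstein k-algebra (A, m, k) of socle degree s, the functions Δ_δ satisfy the symmetry Δ_δ(i) = Δ_δ(s - δ - i) for all 0 ≤ i ≤ s - δ, and Δ_δ(i) = 0 for i outside this range. -/
/-!
`A`-linearity of the pairing gives `Φ(a, b) = Φ(1, ab)`, so `Φ` is symmetric and the orthogonal
of an ideal `I` is its annihilator `(0 : I)`. Hence, with `P ⊇ P'` the powers `m^i ⊇ m^{i+1}`,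
`R ⊇ R'` the powers `m^j ⊇ m^{j+1}` and `i + j + δ = s`, `Δ_δ(i)` is the dimension of
`(P ⊓ R'^⊥) / ((P' ⊓ R'^⊥) ⊔ (P ⊓ R^⊥))`. Taking orthogonals reverses inclusions and swaps `⊓`
and `⊔`; by modularity of the lattice of subspaces it identifies the dual of this quotient with
the same quotient with `(P, P')` and `(R, R')` exchanged, which computes `Δ_δ(j)`.
-/

/-- `Δ_δ(i)` of Iarrobino's symmetric decomposition: the dimension of
`(m^i ∩ (0:m^{s-i-δ+1})) / (m^{i+1} ∩ (0:m^{s-i-δ+1}) + m^i ∩ (0:m^{s-i-δ}))`,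
computed as a difference of `k`-dimensions (negative exponents are truncated to `0`,
and `m^0 = A`, whose annihilator is `0`). -/
noncomputable def hilbDelta (k A : Type*) [Field k] [CommRing A] [Algebra k A]
    [IsLocalRing A] (s δ i : ℕ) : ℕ :=
  let m : Ideal A := IsLocalRing.maximalIdeal A
  let ann : ℤ → Ideal A := fun j => Submodule.annihilator (m ^ j.toNat)
  Module.finrank k ((m ^ i ⊓ ann ((s : ℤ) - i - δ + 1)).restrictScalars k) -
    Module.finrank k (((m ^ (i + 1) ⊓ ann ((s : ℤ) - i - δ + 1)) ⊔
      (m ^ i ⊓ ann ((s : ℤ) - i - δ))).restrictScalars k)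

open Module

section Modular

variable {α : Type*} [Lattice α] [IsModularLattice α] {a a' b b' : α}

theorem sup_inf_sup_eq_of_le_of_le (ha : a ≤ a') (hb : b' ≤ b) :
    (a' ⊔ b') ⊓ (a ⊔ b) = a ⊔ b' ⊔ b ⊓ a' := by
  rw [inf_comm, sup_inf_assoc_of_le b (ha.trans le_sup_left), sup_comm a' b', inf_comm b,
    sup_inf_assoc_of_le a' hb, sup_assoc, inf_comm]

theorem sup_inf_inf_eq_of_le_of_le (ha : a ≤ a') (hb : b' ≤ b) :
    (a ⊔ b') ⊓ (b ⊓ a') = b' ⊓ a' ⊔ b ⊓ a := by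
  rw [inf_comm b, ← inf_assoc, sup_inf_assoc_of_le b' ha, sup_comm,
    sup_inf_assoc_of_le a (inf_le_left.trans hb), inf_comm a]

end Modular

namespace LinearMap.BilinForm

section Orthogonal

variable {k V : Type*} [Field k] [AddCommGroup V] [Module k V] {B : LinearMap.BilinForm k V}

theorem orthogonal_sup (U W : Submodule k V) :
    B.orthogonal (U ⊔ W) = B.orthogonal U ⊓ B.orthogonal W := by
  refine le_antisymm (le_inf (B.orthogonal_le le_sup_left) (B.orthogonal_le le_sup_right)) ?_
  rintro x ⟨hU, hW⟩ _ hn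
  obtain ⟨u, hu, w, hw, rfl⟩ := Submodule.mem_sup.1 hn
  simp [B.mem_orthogonal_iff.1 hU u hu, B.mem_orthogonal_iff.1 hW w hw]

variable [FiniteDimensional k V]

theorem orthogonal_inf (hB : B.Nondegenerate) (hrefl : B.IsRefl) (U W : Submodule k V) :
    B.orthogonal (U ⊓ W) = B.orthogonal U ⊔ B.orthogonal W := by
  conv_lhs => rw [← B.orthogonal_orthogonal hB hrefl U, ← B.orthogonal_orthogonal hB hrefl W,
    ← orthogonal_sup]
  exact B.orthogonal_orthogonal hB hrefl _

theorem finrank_sub_finrank_eq_of_orthogonal (hB : B.Nondegenerate) {U U' W W' : Submodule k V}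
    (hW : W ≤ U) (hW' : W' ≤ U') (hsup : B.orthogonal W = B.orthogonal U ⊔ U')
    (hinf : B.orthogonal U ⊓ U' = W') :
    finrank k U - finrank k W = finrank k U' - finrank k W' := by
  have hdimW := finrank_orthogonal hB W
  have hdimU := finrank_orthogonal hB U
  have hsum := Submodule.finrank_sup_add_finrank_inf_eq (B.orthogonal U) U'
  rw [← hsup, hinf] at hsum
  have := Submodule.finrank_le U
  have := Submodule.finrank_mono hW
  have := Submodule.finrank_mono hW'
  omega

theorem finrank_inf_orthogonal_sub_comm (hB : B.Nondegenerate) (hrefl : B.IsRefl)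
    {P P' R R' : Submodule k V} (hP : P' ≤ P) (hR : R' ≤ R) :
    finrank k ↥(P ⊓ B.orthogonal R') -
        finrank k ↥(P' ⊓ B.orthogonal R' ⊔ P ⊓ B.orthogonal R) =
      finrank k ↥(R ⊓ B.orthogonal P') -
        finrank k ↥(R' ⊓ B.orthogonal P' ⊔ R ⊓ B.orthogonal P) := by
  have hPo := B.orthogonal_le hP
  have hRo := B.orthogonal_le hR
  refine finrank_sub_finrank_eq_of_orthogonal hB
    (sup_le (inf_le_inf_right _ hP) (inf_le_inf_left _ hRo))
    (sup_le (inf_le_inf_right _ hR) (inf_le_inf_left _ hPo)) ?_ ?_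
  · rw [orthogonal_sup, orthogonal_inf hB hrefl, orthogonal_inf hB hrefl, orthogonal_inf hB hrefl,
      B.orthogonal_orthogonal hB hrefl, B.orthogonal_orthogonal hB hrefl,
      sup_inf_sup_eq_of_le_of_le hPo hR]
  · rw [orthogonal_inf hB hrefl, B.orthogonal_orthogonal hB hrefl,
      sup_inf_inf_eq_of_le_of_le hPo hR]

end Orthogonal

section AlgebraPairing

variable {k A : Type*} [Field k] [CommRing A] [Algebra k A] {Φ : LinearMap.BilinForm k A}

theorem apply_eq_apply_one_mul
    (hAlin : ∀ a b c : A, Φ (a * b) c = Φ b (a * c)) (a b : A) : Φ a b = Φ 1 (a * b) := by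
  rw [← hAlin, mul_one]

theorem isSymm_of_apply_mul_left
    (hAlin : ∀ a b c : A, Φ (a * b) c = Φ b (a * c)) : Φ.IsSymm :=
  ⟨fun a b => by
    rw [apply_eq_apply_one_mul hAlin a, apply_eq_apply_one_mul hAlin b, mul_comm]⟩

theorem orthogonal_restrictScalars_eq_annihilator
    (hAlin : ∀ a b c : A, Φ (a * b) c = Φ b (a * c)) (hΦ : Φ.SeparatingLeft) (I : Ideal A) :
    Φ.orthogonal (I.restrictScalars k) = I.annihilator.restrictScalars k := by
  ext x
  simp only [mem_orthogonal_iff, Submodule.restrictScalars_mem, Submodule.mem_annihilator,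
    smul_eq_mul]
  refine ⟨fun hx y hy => hΦ _ fun c => ?_, fun hx y hy => ?_⟩
  · rw [apply_eq_apply_one_mul hAlin, show x * y * c = y * c * x by ring,
      ← apply_eq_apply_one_mul hAlin]
    exact hx _ (I.mul_mem_right c hy)
  · rw [apply_eq_apply_one_mul hAlin, mul_comm, hx y hy, map_zero]

end AlgebraPairing

end LinearMap.BilinForm

section hilbDelta

variable (k : Type*) {A : Type*} [Field k] [CommRing A] [Algebra k A] [IsLocalRing A]

local notation "𝔪" => IsLocalRing.maximalIdeal A

theorem hilbDelta_of_add_eq {s δ i j : ℕ} (h : i + j + δ = s) :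
    hilbDelta k A s δ i =
      finrank k ↥((𝔪 ^ i).restrictScalars k ⊓ (𝔪 ^ (j + 1)).annihilator.restrictScalars k) -
        finrank k ↥((𝔪 ^ (i + 1)).restrictScalars k ⊓
            (𝔪 ^ (j + 1)).annihilator.restrictScalars k ⊔
          (𝔪 ^ i).restrictScalars k ⊓ (𝔪 ^ j).annihilator.restrictScalars k) := by
  have hj₁ : ((s : ℤ) - i - δ + 1).toNat = j + 1 := by omega
  have hj : ((s : ℤ) - i - δ).toNat = j := by omega
  dsimp only [hilbDelta]
  beta_reduce
  rw [hj₁, hj, Submodule.restrictScalars_sup, Submodule.restrictScalars_inf,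
    Submodule.restrictScalars_inf, Submodule.restrictScalars_inf]

theorem hilbDelta_of_lt {s δ i : ℕ} (h : s < i + δ) : hilbDelta k A s δ i = 0 := by
  have h₀ : ((s : ℤ) - i - δ + 1).toNat = 0 := by omega
  dsimp only [hilbDelta]
  beta_reduce
  rw [h₀, pow_zero, Ideal.one_eq_top, Submodule.annihilator_top,
    Module.annihilator_eq_bot.2 inferInstance, inf_bot_eq, Submodule.restrictScalars_bot,
    finrank_bot, zero_tsub]

end hilbDelta

theorem iarrobino_delta_symmetric_general {k A : Type*} [Field k] [CommRing A]
    [Algebra k A] [FiniteDimensional k A] [IsLocalRing A]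
    (Φ : A →ₗ[k] A →ₗ[k] k)
    (hnondeg : ∀ a : A, (∀ b : A, Φ a b = 0) → a = 0)
    (hAlin : ∀ a b c : A, Φ (a * b) c = Φ b (a * c))
    (s : ℕ)
    (δ : ℕ) :
    (∀ i : ℕ, i ≤ s - δ → hilbDelta k A s δ i = hilbDelta k A s δ (s - δ - i)) ∧
    (∀ i : ℕ, s - δ < i → hilbDelta k A s δ i = 0) := by
  have hrefl : Φ.IsRefl := (LinearMap.BilinForm.isSymm_of_apply_mul_left hAlin).isRefl
  have hΦ : Φ.Nondegenerate := hrefl.nondegenerate_iff_separatingLeft.2 hnondeg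
  refine ⟨fun i hi => ?_, fun i hi => hilbDelta_of_lt k (by omega)⟩
  obtain hle | hlt := le_or_gt (i + δ) s
  · rw [hilbDelta_of_add_eq k (j := s - δ - i) (by omega),
      hilbDelta_of_add_eq k (j := i) (by omega)]
    have hann := LinearMap.BilinForm.orthogonal_restrictScalars_eq_annihilator hAlin hnondeg
    rw [← hann, ← hann, ← hann, ← hann]
    exact LinearMap.BilinForm.finrank_inf_orthogonal_sub_comm hΦ hrefl
      (Ideal.pow_le_pow_right i.le_succ) (Ideal.pow_le_pow_right (s - δ - i).le_succ)
  · rw [show s - δ - i = i by omega]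

/-- in Iarrobino's symmetric decomposition for a finite local Gorenstein
`k`-algebra `(A, m, k)` of socle degree `s` (Gorenstein witnessed by a symmetric
nondegenerate `A`-linear pairing `Φ`), each `Δ_δ` satisfies the symmetry
`Δ_δ(i) = Δ_δ(s - δ - i)` for `0 ≤ i ≤ s - δ` and vanishes outside this range. -/
theorem iarrobino_delta_symmetric {k A : Type*} [Field k] (h2 : (2 : k) ≠ 0) [CommRing A]
    [Algebra k A] [FiniteDimensional k A] [IsLocalRing A]
    (Φ : A →ₗ[k] A →ₗ[k] k)
    (hsymm : ∀ a b : A, Φ a b = Φ b a)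
    (hnondeg : ∀ a : A, (∀ b : A, Φ a b = 0) → a = 0)
    (hAlin : ∀ a b c : A, Φ (a * b) c = Φ b (a * c))
    (s : ℕ)
    (hs : (IsLocalRing.maximalIdeal A) ^ s ≠ ⊥)
    (hs' : (IsLocalRing.maximalIdeal A) ^ (s + 1) = ⊥)
    (δ : ℕ) (hδ : δ + 2 ≤ s) :
    (∀ i : ℕ, i ≤ s - δ → hilbDelta k A s δ i = hilbDelta k A s δ (s - δ - i)) ∧
    (∀ i : ℕ, s - δ < i → hilbDelta k A s δ i = 0) :=
  iarrobino_delta_symmetric_general Φ hnondeg hAlin s δ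
end

section
/- Let A = k[x,y]/(xy, x² − y³). Then A is a local Gorenstein algebra of dimension 5 over k, its associated graded algebra gr(A) is isomorphic to k[x,y]/(xy, x², y⁴), the Hilbert function is H_A = (1,2,1,1), and gr(A) is not Gorenstein. -/
open MvPolynomial

/-- The initial form (lowest-degree nonzero homogeneous component) of a polynomial. -/
noncomputable def initialForm {k : Type*} [Field k] (f : MvPolynomial (Fin 2) k) :
    MvPolynomial (Fin 2) k :=
  homogeneousComponent (sInf {n | homogeneousComponent n f ≠ 0}) f

/-- The ideal of initial forms (the ideal defining the associated graded ring). -/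
noncomputable def initialIdeal {k : Type*} [Field k] (I : Ideal (MvPolynomial (Fin 2) k)) :
    Ideal (MvPolynomial (Fin 2) k) :=
  Ideal.span {g | ∃ f ∈ I, f ≠ 0 ∧ g = initialForm f}

/-- The ideal `(xy, x² − y³)` of `k[x,y]`. -/
noncomputable def exIdealI (k : Type*) [Field k] : Ideal (MvPolynomial (Fin 2) k) :=
  Ideal.span {X 0 * X 1, X 0 ^ 2 - X 1 ^ 3}

/-- The ideal `(xy, x², y⁴)` of `k[x,y]`. -/
noncomputable def exIdealJ (k : Type*) [Field k] : Ideal (MvPolynomial (Fin 2) k) :=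
  Ideal.span {X 0 * X 1, X 0 ^ 2, X 1 ^ 4}

/-- `A = k[x,y]/(xy, x² − y³)`. -/
noncomputable def exAlgA (k : Type*) [Field k] : Type _ :=
  MvPolynomial (Fin 2) k ⧸ exIdealI k

noncomputable instance (k : Type*) [Field k] : CommRing (exAlgA k) :=
  Ideal.Quotient.commRing _

noncomputable instance (k : Type*) [Field k] : Algebra k (exAlgA k) :=
  Ideal.Quotient.algebra k

/-- `B = k[x,y]/(xy, x², y⁴)`, the expected associated graded algebra. -/
noncomputable def exAlgB (k : Type*) [Field k] : Type _ :=
  MvPolynomial (Fin 2) k ⧸ exIdealJ k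

noncomputable instance (k : Type*) [Field k] : CommRing (exAlgB k) :=
  Ideal.Quotient.commRing _

noncomputable instance (k : Type*) [Field k] : Algebra k (exAlgB k) :=
  Ideal.Quotient.algebra k

/-- The maximal ideal `(x, y)` of `A`. -/
noncomputable def exMaxA (k : Type*) [Field k] : Ideal (exAlgA k) :=
  Ideal.span {Ideal.Quotient.mk (exIdealI k) (X 0), Ideal.Quotient.mk (exIdealI k) (X 1)}

/-- The maximal ideal `(x, y)` of `B`. -/
noncomputable def exMaxB (k : Type*) [Field k] : Ideal (exAlgB k) :=
  Ideal.span {Ideal.Quotient.mk (exIdealJ k) (X 0), Ideal.Quotient.mk (exIdealJ k) (X 1)}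

/-!
The algebra `A` is spanned by `1, x, y, y², y³`: this span is stable under multiplication by
`x` and `y` because `xy = 0`, `x² = y³` and `y⁴ = y x² = 0`. The five elements are independent
because the coefficients of `1, x, y, y²`, and the sum of the coefficients of `y³` and `x²`,
vanish on every element of `I`. All statements about `A` are then linear algebra in this basis:
`m = ⟨x, y, y², y³⟩`, `m² = ⟨y², y³⟩`, `m³ = (0 : m) = ⟨y³⟩`, `m⁴ = 0`, and every element is a
scalar plus a nilpotent, so `A` is local.

The same coefficient relations show that the initial form of an element of `I` has no
`1, x, y, y²` term, and a `y³` term only if it has degree 3, in which case the `x²` coefficient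
vanishes and with it the `y³` coefficient; so the initial form lies in the monomial ideal
`(xy, x², y⁴)`, whose generators are the initial forms of `xy, x² − y³, y⁴ ∈ I`. In
`k[x,y]/(xy, x², y⁴)` both `x` and `y³` are killed by `m`, so its socle has dimension at least 2.
-/

theorem adjoin_mk_X_eq_top {R : Type*} [CommRing R] (I : Ideal (MvPolynomial (Fin 2) R)) :
    Algebra.adjoin R {Ideal.Quotient.mk I (X 0), Ideal.Quotient.mk I (X 1)} = ⊤ := by
  have h : {Ideal.Quotient.mk I (X 0), Ideal.Quotient.mk I (X 1)} =
      Ideal.Quotient.mkₐ R I '' Set.range X := by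
    ext a
    simp [Fin.exists_fin_two, eq_comm]
  rw [h, Algebra.adjoin_image, adjoin_range_X, Algebra.map_top, AlgHom.range_eq_top]
  exact Ideal.Quotient.mkₐ_surjective R I

section SpanOfAdjoin

variable {R A : Type*} [CommSemiring R] [CommSemiring A] [Algebra R A] {s u : Set A}

theorem mul_mem_span_of_adjoin_eq_top (hs : Algebra.adjoin R s = ⊤)
    (hu : ∀ a ∈ s, ∀ b ∈ u, a * b ∈ Submodule.span R u) (a : A) {b : A}
    (hb : b ∈ Submodule.span R u) : a * b ∈ Submodule.span R u := by
  have ha : a ∈ Algebra.adjoin R s := hs ▸ Algebra.mem_top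
  induction ha using Algebra.adjoin_induction generalizing b with
  | mem a ha =>
    induction hb using Submodule.span_induction with
    | mem b hb => exact hu a ha b hb
    | zero => rw [mul_zero]; exact zero_mem _
    | add b c _ _ hb hc => rw [mul_add]; exact add_mem hb hc
    | smul r b _ hb => rw [mul_smul_comm]; exact Submodule.smul_mem _ r hb
  | algebraMap r => rw [← Algebra.smul_def]; exact Submodule.smul_mem _ r hb
  | add a c _ _ ha hc => rw [add_mul]; exact add_mem (ha hb) (hc hb)
  | mul a c _ _ ha hc => rw [mul_assoc]; exact ha (hc hb)

theorem span_eq_top_of_adjoin_eq_top (hs : Algebra.adjoin R s = ⊤)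
    (h1 : (1 : A) ∈ Submodule.span R u) (hu : ∀ a ∈ s, ∀ b ∈ u, a * b ∈ Submodule.span R u) :
    Submodule.span R u = ⊤ :=
  eq_top_iff.mpr fun a _ => mul_one a ▸ mul_mem_span_of_adjoin_eq_top hs hu a h1

theorem Ideal.restrictScalars_span_eq_span (hs : Algebra.adjoin R s = ⊤) {t : Set A}
    (htu : t ⊆ Submodule.span R u) (hut : u ⊆ Ideal.span t)
    (hu : ∀ a ∈ s, ∀ b ∈ u, a * b ∈ Submodule.span R u) :
    (Ideal.span t).restrictScalars R = Submodule.span R u := by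
  refine le_antisymm (fun a ha => ?_) (Submodule.span_le.mpr hut)
  induction ha using Submodule.span_induction with
  | mem b hb => exact htu hb
  | zero => exact zero_mem _
  | add b c _ _ hb hc => exact add_mem hb hc
  | smul a b _ hb => exact mul_mem_span_of_adjoin_eq_top hs hu a hb

end SpanOfAdjoin

theorem span_one_x_y_pow_eq_top {k Q : Type*} [CommRing k] [CommRing Q] [Algebra k Q] {x y : Q}
    (hgen : Algebra.adjoin k {x, y} = ⊤) (c : k) (hxy : x * y = 0) (hx2 : x ^ 2 = c • y ^ 3)
    (hy4 : y ^ 4 = 0) : Submodule.span k (Set.range ![1, x, y, y ^ 2, y ^ 3]) = ⊤ := by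
  have hyx : y * x = 0 := by rw [mul_comm, hxy]
  have hxy2 : x * y ^ 2 = 0 := by rw [pow_two, ← mul_assoc, hxy, zero_mul]
  have hxy3 : x * y ^ 3 = 0 := by rw [pow_succ', ← mul_assoc, hxy, zero_mul]
  refine span_eq_top_of_adjoin_eq_top hgen (Submodule.subset_span ⟨0, rfl⟩) ?_
  simp [← pow_two, ← pow_succ', hx2, hxy, hyx, hxy2, hxy3, hy4, Submodule.mem_span_of_mem,
    Submodule.smul_mem]

theorem IsLocalRing.of_isNilpotent_sub_algebraMap {k A : Type*} [Field k] [CommRing A]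
    [Algebra k A] [Nontrivial A] (h : ∀ a : A, ∃ c : k, IsNilpotent (a - algebraMap k A c)) :
    IsLocalRing A := by
  refine IsLocalRing.of_isUnit_or_isUnit_one_sub_self fun a => ?_
  obtain ⟨c, hc⟩ := h a
  by_cases hc0 : c = 0
  · rw [hc0, map_zero, sub_zero] at hc
    exact Or.inr hc.isUnit_one_sub
  · left
    simpa using hc.isUnit_add_right_of_commute
      ((isUnit_iff_ne_zero.mpr hc0).map (algebraMap k A)) (Commute.all _ _)

section Polynomial

open Finsupp

variable {k : Type*} [Field k]

theorem X_mul_X_eq_monomial :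
    (X 0 * X 1 : MvPolynomial (Fin 2) k) = monomial (single 0 1 + single 1 1) 1 := by
  rw [monomial_single_add, pow_one, ← X_pow_eq_monomial, pow_one]

theorem coeff_of_mem_exIdealI {f : MvPolynomial (Fin 2) k} (hf : f ∈ exIdealI k) :
    coeff 0 f = 0 ∧ coeff (single 0 1) f = 0 ∧ coeff (single 1 1) f = 0 ∧
      coeff (single 1 2) f = 0 ∧ coeff (single 1 3) f = -coeff (single 0 2) f := by
  obtain ⟨p, q, rfl⟩ := Ideal.mem_span_pair.mp hf
  simp [X_mul_X_eq_monomial, X_pow_eq_monomial, mul_sub, coeff_mul_monomial', Finsupp.le_def,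
    Fin.forall_fin_two]

theorem mem_exIdealJ_iff {f : MvPolynomial (Fin 2) k} :
    f ∈ exIdealJ k ↔ ∀ d ∈ f.support, 1 ≤ d 0 ∧ 1 ≤ d 1 ∨ 2 ≤ d 0 ∨ 4 ≤ d 1 := by
  have hJ : exIdealJ k = Ideal.span ((monomial · (1 : k)) ''
      {single 0 1 + single 1 1, single 0 2, single 1 4}) := by
    simp [exIdealJ, Set.image_insert_eq, X_mul_X_eq_monomial, X_pow_eq_monomial]
  rw [hJ, mem_ideal_span_monomial_image]
  simp [Finsupp.le_def, Fin.forall_fin_two]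

theorem initialForm_add_of_isHomogeneous {g h : MvPolynomial (Fin 2) k} {m n : ℕ}
    (hg : g.IsHomogeneous m) (hg0 : g ≠ 0) (hh : h.IsHomogeneous n) (hmn : m < n) :
    initialForm (g + h) = g := by
  have hcomp (i : ℕ) : homogeneousComponent i (g + h) =
      (if i = m then g else 0) + if i = n then h else 0 := by
    rw [map_add, homogeneousComponent_of_mem ((mem_homogeneousSubmodule _ _).mpr hg),
      homogeneousComponent_of_mem ((mem_homogeneousSubmodule _ _).mpr hh)]
  have hm : m ∈ {i | homogeneousComponent i (g + h) ≠ 0} := by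
    simpa [hcomp, hmn.ne] using hg0
  have hinf : sInf {i | homogeneousComponent i (g + h) ≠ 0} = m := by
    refine le_antisymm (Nat.sInf_le hm) (le_csInf ⟨m, hm⟩ fun i hi => ?_)
    by_contra! hlt
    simp [hcomp, hlt.ne, (hlt.trans hmn).ne] at hi
  rw [initialForm, hinf, hcomp]
  simp [hmn.ne]

theorem initialForm_of_isHomogeneous {g : MvPolynomial (Fin 2) k} {m : ℕ}
    (hg : g.IsHomogeneous m) (hg0 : g ≠ 0) : initialForm g = g := by
  simpa using
    initialForm_add_of_isHomogeneous hg hg0 (isHomogeneous_zero _ _ (m + 1)) m.lt_succ_self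

theorem coeff_ne_zero_of_mem_support_initialForm {f : MvPolynomial (Fin 2) k}
    {d : Fin 2 →₀ ℕ} (hd : d ∈ (initialForm f).support) : coeff d f ≠ 0 := by
  rw [MvPolynomial.mem_support_iff, initialForm, coeff_homogeneousComponent] at hd
  exact fun h => hd (by simp [h])

theorem homogeneousComponent_eq_zero_of_mem_support_initialForm {f : MvPolynomial (Fin 2) k}
    {d : Fin 2 →₀ ℕ} (hd : d ∈ (initialForm f).support) {i : ℕ} (hi : i < d.degree) :
    homogeneousComponent i f = 0 := by
  rw [MvPolynomial.mem_support_iff, initialForm, coeff_homogeneousComponent] at hd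
  split_ifs at hd with hdeg
  · by_contra hne
    exact Nat.notMem_of_lt_sInf (hdeg ▸ hi) hne
  · exact absurd rfl hd

theorem initialForm_mem_exIdealJ {f : MvPolynomial (Fin 2) k} (hf : f ∈ exIdealI k) :
    initialForm f ∈ exIdealJ k := by
  rw [mem_exIdealJ_iff]
  intro d hd
  have hcoeff := coeff_ne_zero_of_mem_support_initialForm hd
  have hx2 (h : 2 < d.degree) : coeff (single 0 2) f = 0 := by
    simpa [coeff_homogeneousComponent] using
      congrArg (coeff (single 0 2)) (homogeneousComponent_eq_zero_of_mem_support_initialForm hd h)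
  obtain ⟨c00, c10, c01, c02, c03⟩ := coeff_of_mem_exIdealI hf
  by_contra! hd'
  obtain ⟨hd0, hd1, hd2⟩ := hd'
  rw [show d = single 0 (d 0) + single 1 (d 1) by ext i; fin_cases i <;> simp] at hcoeff hx2
  interval_cases d 0 <;> interval_cases d 1 <;> simp_all

theorem initialIdeal_exIdealI : initialIdeal (exIdealI k) = exIdealJ k := by
  refine le_antisymm (Ideal.span_le.mpr ?_) (Ideal.span_le.mpr ?_)
  · rintro _ ⟨f, hf, -, rfl⟩
    exact initialForm_mem_exIdealJ hf
  have hXY : X 0 * X 1 ∈ exIdealI k := Ideal.subset_span (by simp)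
  have hX2 : X 0 ^ 2 - X 1 ^ 3 ∈ exIdealI k := Ideal.subset_span (by simp)
  have hY4 : X 1 ^ 4 ∈ exIdealI k := Ideal.mem_span_pair.mpr ⟨X 0, -X 1, by ring⟩
  have hXY0 : (X 0 * X 1 : MvPolynomial (Fin 2) k) ≠ 0 := mul_ne_zero (X_ne_zero _) (X_ne_zero _)
  have hX0 : (X 0 ^ 2 : MvPolynomial (Fin 2) k) ≠ 0 := pow_ne_zero _ (X_ne_zero _)
  have hX20 : (X 0 ^ 2 - X 1 ^ 3 : MvPolynomial (Fin 2) k) ≠ 0 := by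
    simp [sub_eq_zero, X_pow_eq_monomial, Finsupp.single_eq_single_iff]
  have hY40 : (X 1 ^ 4 : MvPolynomial (Fin 2) k) ≠ 0 := pow_ne_zero _ (X_ne_zero _)
  simp only [Set.insert_subset_iff, Set.singleton_subset_iff, SetLike.mem_coe]
  refine ⟨Ideal.subset_span ⟨_, hXY, hXY0, ?_⟩, Ideal.subset_span ⟨_, hX2, hX20, ?_⟩,
    Ideal.subset_span ⟨_, hY4, hY40, ?_⟩⟩
  · exact (initialForm_of_isHomogeneous ((isHomogeneous_X _ _).mul (isHomogeneous_X _ _)) hXY0).symm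
  · rw [sub_eq_add_neg, initialForm_add_of_isHomogeneous (isHomogeneous_X_pow 0 2) hX0
      (isHomogeneous_X_pow 1 3).neg (by norm_num)]
  · exact (initialForm_of_isHomogeneous (isHomogeneous_X_pow _ _) hY40).symm

end Polynomial

namespace exAlgA

open Submodule

variable (k : Type*) [Field k]

noncomputable def mk : MvPolynomial (Fin 2) k →ₐ[k] exAlgA k := Ideal.Quotient.mkₐ k (exIdealI k)

noncomputable def x : exAlgA k := mk k (X 0)

noncomputable def y : exAlgA k := mk k (X 1)

variable {k}

theorem mk_eq_zero_iff {f : MvPolynomial (Fin 2) k} : mk k f = 0 ↔ f ∈ exIdealI k :=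
  Ideal.Quotient.eq_zero_iff_mem

theorem exMaxA_eq : exMaxA k = Ideal.span {x k, y k} := rfl

theorem adjoin_x_y : Algebra.adjoin k {x k, y k} = ⊤ := adjoin_mk_X_eq_top _

@[simp] theorem x_mul_y : x k * y k = 0 := by
  rw [x, y, ← map_mul, mk_eq_zero_iff]
  exact Ideal.subset_span (by simp)

@[simp] theorem y_mul_x : y k * x k = 0 := by rw [mul_comm, x_mul_y]

@[simp] theorem x_sq : x k ^ 2 = y k ^ 3 := by
  rw [x, y, ← sub_eq_zero, ← map_pow, ← map_pow, ← map_sub, mk_eq_zero_iff]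
  exact Ideal.subset_span (by simp)

@[simp] theorem x_mul_y_sq : x k * y k ^ 2 = 0 := by rw [pow_two, ← mul_assoc, x_mul_y, zero_mul]

@[simp] theorem x_mul_y_cube : x k * y k ^ 3 = 0 := by
  rw [pow_succ', ← mul_assoc, x_mul_y, zero_mul]

@[simp] theorem y_pow_four : y k ^ 4 = 0 := by
  rw [pow_succ', ← x_sq, pow_two, ← mul_assoc, y_mul_x, zero_mul]

theorem span_eq_top : span k (Set.range ![1, x k, y k, y k ^ 2, y k ^ 3]) = ⊤ :=
  span_one_x_y_pow_eq_top adjoin_x_y 1 x_mul_y (by rw [one_smul, x_sq]) y_pow_four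

-- Instance search does not find `Module k (exAlgA k)` over the `AddCommGroup` structure, so
-- lemmas stated for modules over rings get the module structure explicitly.
theorem linearIndependent : LinearIndependent k ![1, x k, y k, y k ^ 2, y k ^ 3] := by
  refine (@Fintype.linearIndependent_iff _ k (exAlgA k) _ _ Algebra.toModule _ _).mpr
    fun c hc => ?_
  have hF : c 0 • 1 + c 1 • X 0 + c 2 • X 1 + c 3 • X 1 ^ 2 + c 4 • X 1 ^ 3 ∈ exIdealI k := by
    rw [← mk_eq_zero_iff, ← hc]
    simp [Fin.sum_univ_five, x, y]
  obtain ⟨c00, c10, c01, c02, c03⟩ := coeff_of_mem_exIdealI hF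
  clear hc hF
  intro i
  fin_cases i <;> simp_all [coeff_X_pow, coeff_X, coeff_one, Finsupp.single_eq_single_iff]

theorem coeff_eq_zero_of_sum_eq_zero {c : Fin 5 → k}
    (h : ∑ i, c i • ![1, x k, y k, y k ^ 2, y k ^ 3] i = 0) (i : Fin 5) : c i = 0 :=
  (@Fintype.linearIndependent_iff _ k (exAlgA k) _ _ Algebra.toModule _ _).mp
    linearIndependent c h i

theorem finrank_eq_five : Module.finrank k (exAlgA k) = 5 := by
  rw [← finrank_top, ← span_eq_top, finrank_span_eq_card linearIndependent, Fintype.card_fin]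

theorem exMaxA_sq : exMaxA k ^ 2 = Ideal.span {y k ^ 2} := by
  rw [pow_two, exMaxA_eq, Ideal.span_pair_mul_span_pair, x_mul_y, y_mul_x, ← pow_two, x_sq,
    ← pow_two]
  refine le_antisymm (Ideal.span_le.mpr ?_) (Ideal.span_mono (by simp))
  simp [Set.insert_subset_iff, Ideal.mem_span_singleton, pow_dvd_pow]

theorem exMaxA_pow_three : exMaxA k ^ 3 = Ideal.span {y k ^ 3} := by
  have h : y k ^ 2 * x k = 0 := by rw [pow_two, mul_assoc, y_mul_x, mul_zero]
  rw [pow_succ, exMaxA_sq, exMaxA_eq, Ideal.span_mul_span', Set.singleton_mul, Set.image_pair, h,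
    ← pow_succ, Ideal.span_insert_zero]

theorem exMaxA_pow_four : exMaxA k ^ 4 = ⊥ := by
  have h : y k ^ 3 * x k = 0 := by rw [mul_comm, x_mul_y_cube]
  rw [pow_succ, exMaxA_pow_three, exMaxA_eq, Ideal.span_mul_span', Set.singleton_mul,
    Set.image_pair, h, ← pow_succ, y_pow_four, Set.pair_eq_singleton, Ideal.span_singleton_eq_bot]

theorem restrictScalars_exMaxA :
    (exMaxA k).restrictScalars k = span k (Set.range ![x k, y k, y k ^ 2, y k ^ 3]) := by
  have hx : x k ∈ Ideal.span {x k, y k} := Ideal.subset_span (by simp)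
  have hy : y k ∈ Ideal.span {x k, y k} := Ideal.subset_span (by simp)
  rw [exMaxA_eq]
  apply Ideal.restrictScalars_span_eq_span adjoin_x_y
  · simp [Set.insert_subset_iff, mem_span_of_mem]
  · simp [Set.insert_subset_iff, hx, hy, Ideal.pow_mem_of_mem _ hy]
  · simp [← pow_two, ← pow_succ', mem_span_of_mem]

theorem restrictScalars_span_y_sq :
    (Ideal.span {y k ^ 2}).restrictScalars k = span k (Set.range ![y k ^ 2, y k ^ 3]) := by
  apply Ideal.restrictScalars_span_eq_span adjoin_x_y
  · simp [mem_span_of_mem]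
  · simp [Set.insert_subset_iff, Ideal.mem_span_singleton, pow_dvd_pow]
  · simp [← pow_succ', mem_span_of_mem]

theorem restrictScalars_span_y_cube :
    (Ideal.span {y k ^ 3}).restrictScalars k = k ∙ y k ^ 3 := by
  apply Ideal.restrictScalars_span_eq_span adjoin_x_y
  · simp
  · simp
  · simp [← pow_succ']

theorem finrank_exMaxA : Module.finrank k ((exMaxA k).restrictScalars k) = 4 := by
  have h : LinearIndependent k ![x k, y k, y k ^ 2, y k ^ 3] :=
    linearIndependent.comp Fin.succ (Fin.succ_injective _)
  rw [restrictScalars_exMaxA, finrank_span_eq_card h, Fintype.card_fin]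

theorem finrank_exMaxA_sq : Module.finrank k ((exMaxA k ^ 2).restrictScalars k) = 2 := by
  have h : LinearIndependent k ![y k ^ 2, y k ^ 3] :=
    linearIndependent.comp (Fin.succ ∘ Fin.succ ∘ Fin.succ)
      ((Fin.succ_injective _).comp ((Fin.succ_injective _).comp (Fin.succ_injective _)))
  rw [exMaxA_sq, restrictScalars_span_y_sq, finrank_span_eq_card h, Fintype.card_fin]

theorem finrank_span_y_cube : Module.finrank k (k ∙ y k ^ 3) = 1 :=
  @finrank_span_singleton k (exAlgA k) _ _ Algebra.toModule _
    ((linearIndependent (k := k)).ne_zero 4)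

theorem finrank_exMaxA_pow_three : Module.finrank k ((exMaxA k ^ 3).restrictScalars k) = 1 := by
  rw [exMaxA_pow_three, restrictScalars_span_y_cube, finrank_span_y_cube]

theorem annihilator_exMaxA : annihilator (exMaxA k) = Ideal.span {y k ^ 3} := by
  refine le_antisymm (fun a ha => ?_) ?_
  · rw [exMaxA_eq, mem_annihilator_span] at ha
    have hax : x k * a = 0 := mul_comm a (x k) ▸ ha ⟨x k, by simp⟩
    have hay : y k * a = 0 := mul_comm a (y k) ▸ ha ⟨y k, by simp⟩
    obtain ⟨c, rfl⟩ := (mem_span_range_iff_exists_fun k).mp (span_eq_top (k := k) ▸ mem_top : a ∈ _)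
    simp only [Fin.sum_univ_five, mul_add, mul_smul_comm] at hax hay
    have hx := coeff_eq_zero_of_sum_eq_zero (c := ![0, c 0, 0, 0, c 1])
      (by simpa [Fin.sum_univ_five, ← pow_two] using hax)
    have hy := coeff_eq_zero_of_sum_eq_zero (c := ![0, 0, c 0, c 2, c 3])
      (by simpa [Fin.sum_univ_five, ← pow_two, ← pow_succ'] using hay)
    have hc : c 0 = 0 ∧ c 1 = 0 ∧ c 2 = 0 ∧ c 3 = 0 := ⟨hx 1, hx 4, hy 3, hy 4⟩
    simpa [Fin.sum_univ_five, hc] using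
      smul_of_tower_mem _ (c 4) (Ideal.mem_span_singleton_self (y k ^ 3))
  · rw [Ideal.span_le, Set.singleton_subset_iff, SetLike.mem_coe, exMaxA_eq,
      mem_annihilator_span]
    rintro ⟨_, rfl | rfl⟩
    · rw [smul_eq_mul, mul_comm, x_mul_y_cube]
    · rw [smul_eq_mul, ← pow_succ, y_pow_four]

theorem finrank_annihilator_exMaxA :
    Module.finrank k ((annihilator (exMaxA k)).restrictScalars k) = 1 := by
  rw [annihilator_exMaxA, restrictScalars_span_y_cube, finrank_span_y_cube]

theorem isLocalRing : IsLocalRing (exAlgA k) := by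
  have : Nontrivial (exAlgA k) := nontrivial_of_ne 1 0 ((linearIndependent (k := k)).ne_zero 0)
  refine IsLocalRing.of_isNilpotent_sub_algebraMap (k := k) fun a => ?_
  have ha : a ∈ span k (insert 1 (Set.range ![x k, y k, y k ^ 2, y k ^ 3])) := by
    rw [← Set.singleton_union, ← Matrix.range_cons, span_eq_top]
    exact mem_top
  obtain ⟨c, z, hz, rfl⟩ := mem_span_insert.mp ha
  rw [← restrictScalars_exMaxA, restrictScalars_mem] at hz
  refine ⟨c, 4, ?_⟩
  rw [Algebra.algebraMap_eq_smul_one, add_sub_cancel_left]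
  simpa [exMaxA_pow_four] using Ideal.pow_mem_pow hz 4

end exAlgA

namespace exAlgB

open Submodule

variable (k : Type*) [Field k]

noncomputable def mk : MvPolynomial (Fin 2) k →ₐ[k] exAlgB k := Ideal.Quotient.mkₐ k (exIdealJ k)

noncomputable def x : exAlgB k := mk k (X 0)

noncomputable def y : exAlgB k := mk k (X 1)

variable {k}

theorem mk_eq_zero_iff {f : MvPolynomial (Fin 2) k} : mk k f = 0 ↔ f ∈ exIdealJ k :=
  Ideal.Quotient.eq_zero_iff_mem

theorem exMaxB_eq : exMaxB k = Ideal.span {x k, y k} := rfl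

theorem adjoin_x_y : Algebra.adjoin k {x k, y k} = ⊤ := adjoin_mk_X_eq_top _

theorem x_mul_y : x k * y k = 0 := by
  rw [x, y, ← map_mul, mk_eq_zero_iff]
  exact Ideal.subset_span (by simp)

theorem x_sq : x k ^ 2 = 0 := by
  rw [x, ← map_pow (mk k), mk_eq_zero_iff]
  exact Ideal.subset_span (by simp)

theorem y_pow_four : y k ^ 4 = 0 := by
  rw [y, ← map_pow, mk_eq_zero_iff]
  exact Ideal.subset_span (by simp)

theorem finite : Module.Finite k (exAlgB k) :=
  ⟨fg_def.mpr ⟨_, Set.finite_range _,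
    span_one_x_y_pow_eq_top adjoin_x_y 0 x_mul_y (by rw [zero_smul, x_sq]) y_pow_four⟩⟩

theorem linearIndependent_x_y_cube : LinearIndependent k ![x k, y k ^ 3] := by
  refine (@Fintype.linearIndependent_iff _ k (exAlgB k) _ _ Algebra.toModule _ _).mpr
    fun c hc => ?_
  have hF : c 0 • X 0 + c 1 • X 1 ^ 3 ∈ exIdealJ k := by
    rw [← mk_eq_zero_iff, ← hc]
    simp [Fin.sum_univ_two, x, y]
  rw [mem_exIdealJ_iff] at hF
  have h0 := hF (Finsupp.single 0 1)
  have h1 := hF (Finsupp.single 1 3)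
  clear hc hF
  intro i
  fin_cases i <;> simp_all [coeff_X_pow, coeff_X, Finsupp.single_eq_single_iff]

theorem two_le_finrank_annihilator_exMaxB :
    2 ≤ Module.finrank k ((annihilator (exMaxB k)).restrictScalars k) := by
  have hx : x k ∈ annihilator (exMaxB k) := by
    rw [exMaxB_eq, mem_annihilator_span]
    rintro ⟨_, rfl | rfl⟩
    · rw [smul_eq_mul, ← pow_two, x_sq]
    · exact x_mul_y
  have hy : y k ^ 3 ∈ annihilator (exMaxB k) := by
    rw [exMaxB_eq, mem_annihilator_span]
    rintro ⟨_, rfl | rfl⟩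
    · rw [smul_eq_mul, mul_comm, pow_succ', ← mul_assoc, x_mul_y, zero_mul]
    · rw [smul_eq_mul, ← pow_succ, y_pow_four]
  have hle : span k (Set.range ![x k, y k ^ 3]) ≤ (annihilator (exMaxB k)).restrictScalars k := by
    simp [span_le, Set.insert_subset_iff, hx, hy]
  have := @FiniteDimensional.finiteDimensional_submodule k (exAlgB k) _ _ Algebra.toModule finite
    ((annihilator (exMaxB k)).restrictScalars k)
  calc 2 = Module.finrank k (span k (Set.range ![x k, y k ^ 3])) := by
        rw [finrank_span_eq_card linearIndependent_x_y_cube, Fintype.card_fin]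
    _ ≤ _ := finrank_mono hle

end exAlgB

theorem example_algebra_properties_general {k : Type*} [Field k] :
    IsLocalRing (exAlgA k) ∧
    Module.finrank k (exAlgA k) = 5 ∧
    -- A is Gorenstein: the socle (0 : m) is one-dimensional
    Module.finrank k ((Submodule.annihilator (exMaxA k)).restrictScalars k) = 1 ∧
    -- gr(A) ≅ k[x,y]/(xy, x², y⁴): the initial ideal of I is J
    initialIdeal (exIdealI k) = exIdealJ k ∧
    -- Hilbert function H_A = (1, 2, 1, 1)
    Module.finrank k ((exMaxA k).restrictScalars k) = 4 ∧
    Module.finrank k (((exMaxA k) ^ 2).restrictScalars k) = 2 ∧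
    Module.finrank k (((exMaxA k) ^ 3).restrictScalars k) = 1 ∧
    (exMaxA k) ^ 4 = ⊥ ∧
    -- gr(A) is not Gorenstein
    Module.finrank k ((Submodule.annihilator (exMaxB k)).restrictScalars k) ≠ 1 :=
  ⟨exAlgA.isLocalRing, exAlgA.finrank_eq_five, exAlgA.finrank_annihilator_exMaxA,
    initialIdeal_exIdealI, exAlgA.finrank_exMaxA, exAlgA.finrank_exMaxA_sq,
    exAlgA.finrank_exMaxA_pow_three, exAlgA.exMaxA_pow_four,
    (exAlgB.two_le_finrank_annihilator_exMaxB (k := k)).trans_lt' one_lt_two |>.ne'⟩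

/-- Let `A = k[x,y]/(xy, x² − y³)`. Then `A` is local, `dim_k A = 5`,
`A` is Gorenstein (its socle `(0 : m)` is 1-dimensional), the associated graded algebra
`gr(A)` is `k[x,y]/(xy, x², y⁴)` (i.e. the ideal of initial forms of `(xy, x²−y³)` is
`(xy, x², y⁴)`), the Hilbert function is `H_A = (1,2,1,1)` (so `dim m = 4`, `dim m² = 2`,
`dim m³ = 1`, `m⁴ = 0`), and `gr(A) = k[x,y]/(xy, x², y⁴)` is not Gorenstein. -/
theorem example_algebra_properties {k : Type*} [Field k] (h2 : (2 : k) ≠ 0) :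
    IsLocalRing (exAlgA k) ∧
    Module.finrank k (exAlgA k) = 5 ∧
    -- A is Gorenstein: the socle (0 : m) is one-dimensional
    Module.finrank k ((Submodule.annihilator (exMaxA k)).restrictScalars k) = 1 ∧
    -- gr(A) ≅ k[x,y]/(xy, x², y⁴): the initial ideal of I is J
    initialIdeal (exIdealI k) = exIdealJ k ∧
    -- Hilbert function H_A = (1, 2, 1, 1)
    Module.finrank k ((exMaxA k).restrictScalars k) = 4 ∧
    Module.finrank k (((exMaxA k) ^ 2).restrictScalars k) = 2 ∧
    Module.finrank k (((exMaxA k) ^ 3).restrictScalars k) = 1 ∧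
    (exMaxA k) ^ 4 = ⊥ ∧
    -- gr(A) is not Gorenstein
    Module.finrank k ((Submodule.annihilator (exMaxB k)).restrictScalars k) ≠ 1 :=
  example_algebra_properties_general
end

section
/- There is no finite local Gorenstein k-algebra whose Hilbert function is (1, n, n+1, 1) for any n ≥ 1. -/
/-!
A Gorenstein artinian local `k`-algebra `A` is Frobenius: a functional `φ` that does not vanish
on the one-dimensional socle `(0 : m)` makes the pairing `(a, b) ↦ φ (a * b)` nondegenerate,
because every nonzero ideal contains the socle. Hence `dim (0 : I) = dim A - dim I` for every
ideal `I`. If `m ^ 4 = 0` then `m ^ 2 ⊆ (0 : m ^ 2)`, so `2 dim m ^ 2 ≤ dim A`; but the Hilbert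
function `(1, n, n + 1, 1)` gives `dim m ^ 2 = n + 2` and `dim A = 2 n + 3`.
-/

open Submodule IsLocalRing
open Module (finrank Dual forall_dual_apply_eq_zero_iff)

theorem Ideal.inf_annihilator_ne_bot_of_isNilpotent {R : Type*} [CommRing R] {I J : Ideal R}
    (hI : IsNilpotent I) (hJ : J ≠ ⊥) : J ⊓ annihilator I ≠ ⊥ := by
  classical
  have hex : ∃ t, I ^ t * J = ⊥ := by
    obtain ⟨N, hN⟩ := hI
    exact ⟨N, by simp [hN]⟩
  obtain ⟨s, hs⟩ : ∃ s, Nat.find hex = s + 1 :=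
    Nat.exists_eq_succ_of_ne_zero fun h ↦ hJ (by simpa [h] using Nat.find_spec hex)
  have hK : I ^ s * J ≠ ⊥ := Nat.find_min hex (by omega)
  refine ne_bot_of_le_ne_bot hK (le_inf Ideal.mul_le_right (le_annihilator_iff.2 ?_))
  rw [smul_eq_mul, mul_right_comm, ← pow_succ, ← hs]
  exact Nat.find_spec hex

section Algebra

variable {k A : Type*} [Field k] [CommRing A] [Algebra k A]

theorem IsLocalRing.isNilpotent_maximalIdeal_of_finiteDimensional [IsLocalRing A]
    [FiniteDimensional k A] : IsNilpotent (maximalIdeal A) := by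
  have := IsArtinianRing.of_finite k A
  simpa [jacobson_eq_maximalIdeal ⊥ bot_ne_top] using
    IsArtinianRing.isNilpotent_jacobson_bot (R := A)

theorem IsLocalRing.annihilator_maximalIdeal_le_of_finrank_eq_one [IsLocalRing A]
    [FiniteDimensional k A]
    (hGor : finrank k ((annihilator (maximalIdeal A)).restrictScalars k) = 1)
    {J : Ideal A} (hJ : J ≠ ⊥) : annihilator (maximalIdeal A) ≤ J := by
  have hne := Ideal.inf_annihilator_ne_bot_of_isNilpotent
    (isNilpotent_maximalIdeal_of_finiteDimensional (k := k)) hJ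
  have hle : (J ⊓ annihilator (maximalIdeal A)).restrictScalars k ≤
      (annihilator (maximalIdeal A)).restrictScalars k := restrictScalars_mono k inf_le_right
  have hpos : 1 ≤ finrank k ((J ⊓ annihilator (maximalIdeal A)).restrictScalars k) := by
    rwa [Submodule.one_le_finrank_iff, Ne, restrictScalars_eq_bot_iff]
  have heq := Submodule.eq_of_le_of_finrank_le hle (by omega)
  exact le_trans (restrictScalars_injective k _ _ heq).ge inf_le_left

def mulPairing (φ : Dual k A) : A →ₗ[k] Dual k A := (LinearMap.mul k A).compr₂ φ

@[simp]
theorem mulPairing_apply (φ : Dual k A) (a b : A) : mulPairing φ a b = φ (a * b) := rfl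

theorem IsLocalRing.exists_injective_mulPairing_of_finrank_eq_one [IsLocalRing A]
    [FiniteDimensional k A]
    (hGor : finrank k ((annihilator (maximalIdeal A)).restrictScalars k) = 1) :
    ∃ φ : Dual k A, Function.Injective (mulPairing φ) := by
  obtain ⟨s, hs, hs0⟩ := (Submodule.ne_bot_iff _).1 <|
    Submodule.one_le_finrank_iff.1 hGor.ge
  obtain ⟨φ, hφ⟩ : ∃ φ : Dual k A, φ s ≠ 0 := by
    by_contra! h
    exact hs0 ((forall_dual_apply_eq_zero_iff k s).1 h)
  refine ⟨φ, (injective_iff_map_eq_zero _).2 fun a ha ↦ by_contra fun ha0 ↦ hφ ?_⟩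
  obtain ⟨c, rfl⟩ := Ideal.mem_span_singleton'.1 <|
    annihilator_maximalIdeal_le_of_finrank_eq_one hGor
      (by rwa [Ne, Ideal.span_singleton_eq_bot]) hs
  rw [mul_comm, ← mulPairing_apply, ha, LinearMap.zero_apply]

namespace Ideal

variable {φ : Dual k A}

theorem annihilator_restrictScalars_eq_comap_dualAnnihilator
    (hφ : Function.Injective (mulPairing φ)) (I : Ideal A) :
    (annihilator I).restrictScalars k =
      ((I.restrictScalars k).dualAnnihilator).comap (mulPairing φ) := by
  ext a
  rw [restrictScalars_mem, mem_annihilator, Submodule.mem_comap, mem_dualAnnihilator]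
  simp only [smul_eq_mul, mulPairing_apply]
  refine ⟨fun h b hb ↦ by rw [h b hb, map_zero], fun h b hb ↦ hφ ?_⟩
  ext c
  simpa [mul_assoc] using h (b * c) (I.mul_mem_right c hb)

theorem finrank_annihilator_add_finrank [FiniteDimensional k A]
    (hφ : Function.Injective (mulPairing φ)) (I : Ideal A) :
    finrank k ((annihilator I).restrictScalars k) + finrank k (I.restrictScalars k) =
      finrank k A := by
  let e : A ≃ₗ[k] Dual k A :=
    LinearMap.linearEquivOfInjective _ hφ Subspace.dual_finrank_eq.symm
  have he : (annihilator I).restrictScalars k = (I.restrictScalars k).dualAnnihilator.map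
      (e.symm : Dual k A →ₗ[k] A) := by
    rw [← comap_equiv_eq_map_symm]
    exact annihilator_restrictScalars_eq_comap_dualAnnihilator hφ I
  rw [he, LinearEquiv.finrank_map_eq, add_comm,
    Subspace.finrank_add_finrank_dualAnnihilator_eq]

theorem two_mul_finrank_le_of_mul_self_eq_bot [FiniteDimensional k A]
    (hφ : Function.Injective (mulPairing φ)) {I : Ideal A} (hI : I * I = ⊥) :
    2 * finrank k (I.restrictScalars k) ≤ finrank k A := by
  have hle : I.restrictScalars k ≤ (annihilator I).restrictScalars k :=
    le_annihilator_iff.2 hI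
  have := finrank_mono hle
  have := finrank_annihilator_add_finrank hφ I
  omega

end Ideal

end Algebra

theorem no_gorenstein_with_hilbert_1_n_np1_1_general {k : Type*} [Field k]
    (n : ℕ)
    (A : Type*) [CommRing A] [Algebra k A] [FiniteDimensional k A] [IsLocalRing A]
    (hGor : Module.finrank k
      ((Submodule.annihilator (IsLocalRing.maximalIdeal A)).restrictScalars k) = 1) :
    ¬ ((Module.finrank k (((IsLocalRing.maximalIdeal A) ^ 0).restrictScalars k) -
          Module.finrank k (((IsLocalRing.maximalIdeal A) ^ 1).restrictScalars k) = 1) ∧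
       (Module.finrank k (((IsLocalRing.maximalIdeal A) ^ 1).restrictScalars k) -
          Module.finrank k (((IsLocalRing.maximalIdeal A) ^ 2).restrictScalars k) = n) ∧
       (Module.finrank k (((IsLocalRing.maximalIdeal A) ^ 2).restrictScalars k) -
          Module.finrank k (((IsLocalRing.maximalIdeal A) ^ 3).restrictScalars k) = n + 1) ∧
       (Module.finrank k (((IsLocalRing.maximalIdeal A) ^ 3).restrictScalars k) -
          Module.finrank k (((IsLocalRing.maximalIdeal A) ^ 4).restrictScalars k) = 1) ∧
       (IsLocalRing.maximalIdeal A) ^ 4 = ⊥) := by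
  rintro ⟨H0, H1, H2, H3, H4⟩
  obtain ⟨φ, hφ⟩ := exists_injective_mulPairing_of_finrank_eq_one hGor
  have hsq : maximalIdeal A ^ 2 * maximalIdeal A ^ 2 = ⊥ := by rw [← pow_add]; exact H4
  have hdim := Ideal.two_mul_finrank_le_of_mul_self_eq_bot hφ hsq
  have h0 : finrank k ((maximalIdeal A ^ 0).restrictScalars k) = finrank k A := by
    rw [pow_zero, Ideal.one_eq_top, restrictScalars_top, finrank_top]
  have h4 : finrank k ((maximalIdeal A ^ 4).restrictScalars k) = 0 := by
    simp [H4]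
  omega

/-- there is no finite local Gorenstein `k`-algebra whose Hilbert function
is `(1, n, n+1, 1)` for any `n ≥ 1`. (Gorenstein: the socle `(0 : m)` is 1-dimensional;
the Hilbert function is `H_A(i) = dim_k m^i/m^{i+1}`.) -/
theorem no_gorenstein_with_hilbert_1_n_np1_1 {k : Type*} [Field k] (h2 : (2 : k) ≠ 0)
    (n : ℕ) (hn : 1 ≤ n)
    (A : Type*) [CommRing A] [Algebra k A] [FiniteDimensional k A] [IsLocalRing A]
    (hGor : Module.finrank k
      ((Submodule.annihilator (IsLocalRing.maximalIdeal A)).restrictScalars k) = 1) :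
    ¬ ((Module.finrank k (((IsLocalRing.maximalIdeal A) ^ 0).restrictScalars k) -
          Module.finrank k (((IsLocalRing.maximalIdeal A) ^ 1).restrictScalars k) = 1) ∧
       (Module.finrank k (((IsLocalRing.maximalIdeal A) ^ 1).restrictScalars k) -
          Module.finrank k (((IsLocalRing.maximalIdeal A) ^ 2).restrictScalars k) = n) ∧
       (Module.finrank k (((IsLocalRing.maximalIdeal A) ^ 2).restrictScalars k) -
          Module.finrank k (((IsLocalRing.maximalIdeal A) ^ 3).restrictScalars k) = n + 1) ∧
       (Module.finrank k (((IsLocalRing.maximalIdeal A) ^ 3).restrictScalars k) -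
          Module.finrank k (((IsLocalRing.maximalIdeal A) ^ 4).restrictScalars k) = 1) ∧
       (IsLocalRing.maximalIdeal A) ^ 4 = ⊥) :=
  no_gorenstein_with_hilbert_1_n_np1_1_general n A hGor
end

section
/- Let V be a d-dimensional vector space, char k ≠ 2, and fix a block partition r_0 + … + r_k = d. Let C (resp. aC) be the space of block upper-triangular matrices with symmetric (resp. antisymmetric) diagonal blocks. Then C and aC are orthogonal complements of each other in M_d(k) with respect to the trace pairing (x, y) ↦ tr(xy). -/
/-!
Treat both spaces at once as the block upper-triangular matrices whose diagonal blocks are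
`ε`-symmetric, for `ε = 1` and `ε = -1`. If `x` is `ε`-compatible and `y` is `(-ε)`-compatible,
then `x p q * y q p = -(x q p * y p q)` for all indices (the terms vanish across blocks, and
`ε² = 1` within a block), so `tr (x y) = -tr (x y)` and `2 ≠ 0` kills it. Conversely, pairing `x`
with the `(-ε)`-compatible test matrices `E q p` (`q` in an earlier block than `p`) and
`E b a - ε E a b` (`a`, `b` in one block) returns `x p q` and `x a b - ε x b a`.
-/

/-- The space of compatible endomorphisms for the block structure `(r 0, …, r K)`:
block upper-triangular matrices whose diagonal blocks are symmetric. Indices are the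
sigma type `(j : Fin K) × Fin (r j)`, whose first component records the block. -/
def blockCompat (k : Type*) [Field k] {K : ℕ} (r : Fin K → ℕ) :
    Submodule k (Matrix ((j : Fin K) × Fin (r j)) ((j : Fin K) × Fin (r j)) k) where
  carrier := {x | (∀ p q, q.1 < p.1 → x p q = 0) ∧
    ∀ (j : Fin K) (s t : Fin (r j)), x ⟨j, s⟩ ⟨j, t⟩ = x ⟨j, t⟩ ⟨j, s⟩}
  add_mem' := by
    rintro a b ⟨ha1, ha2⟩ ⟨hb1, hb2⟩
    constructor
    · intro p q h
      show a p q + b p q = 0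
      rw [ha1 p q h, hb1 p q h, add_zero]
    · intro j s t
      show a _ _ + b _ _ = a _ _ + b _ _
      rw [ha2 j s t, hb2 j s t]
  zero_mem' := by
    constructor
    · intro p q _; rfl
    · intro j s t; rfl
  smul_mem' := by
    rintro c x ⟨h1, h2⟩
    constructor
    · intro p q h
      show c * x p q = 0
      rw [h1 p q h, mul_zero]
    · intro j s t
      show c * x _ _ = c * x _ _
      rw [h2 j s t]

/-- The space of anticompatible endomorphisms for the block structure `(r 0, …, r K)`:
block upper-triangular matrices whose diagonal blocks are antisymmetric. -/
def blockAnticompat (k : Type*) [Field k] {K : ℕ} (r : Fin K → ℕ) :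
    Submodule k (Matrix ((j : Fin K) × Fin (r j)) ((j : Fin K) × Fin (r j)) k) where
  carrier := {x | (∀ p q, q.1 < p.1 → x p q = 0) ∧
    ∀ (j : Fin K) (s t : Fin (r j)), x ⟨j, s⟩ ⟨j, t⟩ = -x ⟨j, t⟩ ⟨j, s⟩}
  add_mem' := by
    rintro a b ⟨ha1, ha2⟩ ⟨hb1, hb2⟩
    constructor
    · intro p q h
      show a p q + b p q = 0
      rw [ha1 p q h, hb1 p q h, add_zero]
    · intro j s t
      show a _ _ + b _ _ = -(a _ _ + b _ _)
      rw [ha2 j s t, hb2 j s t, neg_add]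
  zero_mem' := by
    constructor
    · intro p q _; rfl
    · intro j s t
      show (0 : k) = -0
      rw [neg_zero]
  smul_mem' := by
    rintro c x ⟨h1, h2⟩
    constructor
    · intro p q h
      show c * x p q = 0
      rw [h1 p q h, mul_zero]
    · intro j s t
      show c * x _ _ = -(c * x _ _)
      rw [h2 j s t, mul_neg]

open Matrix

theorem Matrix.trace_mul_eq_zero_of_antisymm {n R : Type*} [Fintype n] [CommRing R]
    [NoZeroDivisors R] (h2 : (2 : R) ≠ 0) {x y : Matrix n n R}
    (h : ∀ p q, x p q * y q p = -(x q p * y p q)) : trace (x * y) = 0 := by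
  have hneg : trace (x * y) = -trace (x * y) :=
    calc trace (x * y) = ∑ p, ∑ q, x p q * y q p := rfl
      _ = ∑ p, ∑ q, -(x q p * y p q) :=
        Fintype.sum_congr _ _ fun p ↦ Fintype.sum_congr _ _ (h p)
      _ = -∑ q, ∑ p, x q p * y p q := by rw [Finset.sum_comm]; simp
      _ = -trace (x * y) := rfl
  exact (mul_eq_zero.1 (by linear_combination hneg : (2 : R) * trace (x * y) = 0)).resolve_left h2

def blockEpsCompat (k : Type*) [CommRing k] {K : ℕ} (r : Fin K → ℕ) (ε : k) :
    Set (Matrix ((j : Fin K) × Fin (r j)) ((j : Fin K) × Fin (r j)) k) :=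
  {x | (∀ p q, q.1 < p.1 → x p q = 0) ∧
    ∀ (j : Fin K) (s t : Fin (r j)), x ⟨j, s⟩ ⟨j, t⟩ = ε * x ⟨j, t⟩ ⟨j, s⟩}

theorem coe_blockCompat (k : Type*) [Field k] {K : ℕ} (r : Fin K → ℕ) :
    (blockCompat k r : Set _) = blockEpsCompat k r 1 := by
  ext x
  simp [blockCompat, blockEpsCompat]

theorem coe_blockAnticompat (k : Type*) [Field k] {K : ℕ} (r : Fin K → ℕ) :
    (blockAnticompat k r : Set _) = blockEpsCompat k r (-1) := by
  ext x
  simp [blockAnticompat, blockEpsCompat]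

section blockEpsCompat

variable {k : Type*} [CommRing k] {K : ℕ} {r : Fin K → ℕ} {ε : k}
  {x y : Matrix ((j : Fin K) × Fin (r j)) ((j : Fin K) × Fin (r j)) k}

theorem mul_apply_eq_neg_of_mem_blockEpsCompat (hε : ε * ε = 1)
    (hx : x ∈ blockEpsCompat k r ε) (hy : y ∈ blockEpsCompat k r (-ε)) (p q) :
    x p q * y q p = -(x q p * y p q) := by
  obtain ⟨i, s⟩ := p
  obtain ⟨j, t⟩ := q
  rcases lt_trichotomy i j with h | rfl | h
  · simp [hx.1 ⟨j, t⟩ ⟨i, s⟩ h, hy.1 ⟨j, t⟩ ⟨i, s⟩ h]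
  · rw [hx.2 i s t, hy.2 i t s]
    linear_combination (-(x ⟨i, t⟩ ⟨i, s⟩ * y ⟨i, s⟩ ⟨i, t⟩)) * hε
  · simp [hx.1 ⟨i, s⟩ ⟨j, t⟩ h, hy.1 ⟨i, s⟩ ⟨j, t⟩ h]

theorem single_mem_blockEpsCompat_of_fst_lt {p q : (j : Fin K) × Fin (r j)} (h : p.1 < q.1)
    (c : k) : single p q c ∈ blockEpsCompat k r ε := by
  refine ⟨fun u v hvu ↦ single_apply_of_ne _ _ _ _ _ ?_, fun j s t ↦ ?_⟩
  · rintro ⟨rfl, rfl⟩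
    exact lt_asymm h hvu
  · rw [single_apply_of_ne, single_apply_of_ne, mul_zero] <;>
    · rintro ⟨rfl, rfl⟩
      exact lt_irrefl _ h

theorem single_add_smul_single_mem_blockEpsCompat (hε : ε * ε = 1)
    {a b : (j : Fin K) × Fin (r j)} (hab : a.1 = b.1) :
    single b a 1 + ε • single a b 1 ∈ blockEpsCompat k r ε := by
  have hlower : ∀ {u v p q : (j : Fin K) × Fin (r j)}, u.1 = v.1 → q.1 < p.1 →
      single u v (1 : k) p q = 0 := by
    rintro u v p q huv hqp
    refine single_apply_of_ne _ _ _ _ _ ?_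
    rintro ⟨rfl, rfl⟩
    exact hqp.ne' huv
  refine ⟨fun p q hqp ↦ ?_, fun j s t ↦ ?_⟩
  · simp only [Matrix.add_apply, Matrix.smul_apply, hlower hab.symm hqp, hlower hab hqp,
      smul_zero, add_zero]
  · -- the matrix is `ε`-symmetric everywhere, not only on the diagonal blocks
    simp only [Matrix.add_apply, Matrix.smul_apply, smul_eq_mul, mul_add, ← mul_assoc, hε,
      one_mul]
    simp only [single_apply, and_comm, add_comm]

theorem mem_blockEpsCompat_of_forall_trace_mul_eq_zero (hε : ε * ε = 1)
    (h : ∀ y ∈ blockEpsCompat k r (-ε), trace (x * y) = 0) : x ∈ blockEpsCompat k r ε := by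
  refine ⟨fun p q hqp ↦ ?_, fun j s t ↦ ?_⟩
  · simpa [trace_mul_single] using h _ (single_mem_blockEpsCompat_of_fst_lt hqp 1)
  · have hε' : -ε * -ε = 1 := by rw [neg_mul_neg, hε]
    have htest := h _ <|
      single_add_smul_single_mem_blockEpsCompat (a := ⟨j, s⟩) (b := ⟨j, t⟩) hε' rfl
    simp only [Matrix.mul_add, Matrix.mul_smul, trace_add, trace_smul, trace_mul_single,
      MulOpposite.op_one, one_smul, smul_eq_mul] at htest
    linear_combination htest

theorem mem_blockEpsCompat_iff_forall_trace_mul_eq_zero [NoZeroDivisors k] (h2 : (2 : k) ≠ 0)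
    (hε : ε * ε = 1) :
    x ∈ blockEpsCompat k r ε ↔ ∀ y ∈ blockEpsCompat k r (-ε), trace (x * y) = 0 :=
  ⟨fun hx _ hy ↦
      trace_mul_eq_zero_of_antisymm h2 (mul_apply_eq_neg_of_mem_blockEpsCompat hε hx hy),
    mem_blockEpsCompat_of_forall_trace_mul_eq_zero hε⟩

end blockEpsCompat

theorem blockCompat_orthogonal_complement_general {k : Type*} [Field k] (h2 : (2 : k) ≠ 0)
    {K : ℕ} (r : Fin K → ℕ) :
    (∀ x : Matrix ((j : Fin K) × Fin (r j)) ((j : Fin K) × Fin (r j)) k,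
      x ∈ blockCompat k r ↔ ∀ y ∈ blockAnticompat k r, Matrix.trace (x * y) = 0) ∧
    (∀ y : Matrix ((j : Fin K) × Fin (r j)) ((j : Fin K) × Fin (r j)) k,
      y ∈ blockAnticompat k r ↔ ∀ x ∈ blockCompat k r, Matrix.trace (x * y) = 0) := by
  simp only [← SetLike.mem_coe, coe_blockCompat, coe_blockAnticompat]
  refine ⟨fun x ↦ ?_, fun y ↦ ?_⟩
  · exact mem_blockEpsCompat_iff_forall_trace_mul_eq_zero h2 (one_mul 1)
  · simpa only [neg_neg, trace_mul_comm y] using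
      mem_blockEpsCompat_iff_forall_trace_mul_eq_zero (x := y) h2 (ε := -1) (by simp)

/-- for a block partition, the spaces of compatible and anticompatible
matrices are orthogonal complements of each other in `M_d(k)` with respect to the trace
pairing `(x, y) ↦ tr (x * y)` (char k ≠ 2). -/
theorem blockCompat_orthogonal_complement {k : Type*} [Field k] (h2 : (2 : k) ≠ 0)
    {K : ℕ} (r : Fin K → ℕ) (hr : ∀ j, 0 < r j) :
    (∀ x : Matrix ((j : Fin K) × Fin (r j)) ((j : Fin K) × Fin (r j)) k,
      x ∈ blockCompat k r ↔ ∀ y ∈ blockAnticompat k r, Matrix.trace (x * y) = 0) ∧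
    (∀ y : Matrix ((j : Fin K) × Fin (r j)) ((j : Fin K) × Fin (r j)) k,
      y ∈ blockAnticompat k r ↔ ∀ x ∈ blockCompat k r, Matrix.trace (x * y) = 0) :=
  blockCompat_orthogonal_complement_general h2 r
end
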